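/- arXiv:2107.01200 — 6 statements merged into one kernel-verified Lean document; each statement's English description precedes it below -/
import Mathlib

section
/- Let (X,d) be a compact metric space and (ψ_n) a sequence of continuous real-valued functions on X. Suppose there exist two dense subsets A and B of X and real numbers α ≠ β such that limsup_{n→∞} ψ_n(x) = α for all x ∈ A and limsup_{n→∞} ψ_n(x) = β for all x ∈ B. Then the set C = {x ∈ X : the sequence (ψ_n(x)) does not converge} is residual (comeager) in X. -/
open Filter Topology

/-- Theorem (preliminary result): if the pointwise limsup of a sequence of continuous
functions takes two distinct constant values on two dense subsets, then the set of points
where the sequence does not converge is residual. -/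
theorem historic_residual_of_two_dense_limsup_values
    {X : Type*} [MetricSpace X] [CompactSpace X]
    (ψ : ℕ → X → ℝ) (hψ : ∀ n, Continuous (ψ n))
    (A B : Set X) (hA : Dense A) (hB : Dense B)
    (α β : ℝ) (hαβ : α ≠ β)
    (hα : ∀ x ∈ A, Filter.limsup (fun n => ψ n x) Filter.atTop = α)
    (hβ : ∀ x ∈ B, Filter.limsup (fun n => ψ n x) Filter.atTop = β) :
    {x : X | ¬ ∃ l : ℝ, Filter.Tendsto (fun n => ψ n x) Filter.atTop (𝓝 l)} ∈ residual X := by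
  set ε : ℝ := |α - β| / 3 with hεdef
  have hε0 : 0 < ε := by
    have : α - β ≠ 0 := sub_ne_zero.mpr hαβ
    have := abs_pos.mpr this
    positivity
  -- the "ε-Cauchy from time N" sets
  set E : ℕ → Set X := fun N => {x | ∀ m ≥ N, ∀ n ≥ N, |ψ m x - ψ n x| ≤ ε} with hEdef
  have hEclosed : ∀ N, IsClosed (E N) := by
    intro N
    have : E N = ⋂ m, ⋂ (_ : m ≥ N), ⋂ n, ⋂ (_ : n ≥ N),
        {x | |ψ m x - ψ n x| ≤ ε} := by
      ext x; simp [hEdef, Set.mem_iInter]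
    rw [this]
    refine isClosed_iInter fun m => isClosed_iInter fun _ =>
      isClosed_iInter fun n => isClosed_iInter fun _ => ?_
    exact isClosed_le (continuous_abs.comp ((hψ m).sub (hψ n))) continuous_const
  -- key estimate: on E N, the limsup is within ε of ψ N x
  have key : ∀ N : ℕ, ∀ x ∈ E N,
      |Filter.limsup (fun n => ψ n x) Filter.atTop - ψ N x| ≤ ε := by
    intro N x hx
    have hub : ∀ᶠ n in atTop, ψ n x ≤ ψ N x + ε := by
      filter_upwards [eventually_ge_atTop N] with n hn
      have := hx n hn N le_rfl
      have := abs_le.mp this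
      linarith [this.2]
    have hlb : ∀ᶠ n in atTop, ψ N x - ε ≤ ψ n x := by
      filter_upwards [eventually_ge_atTop N] with n hn
      have := hx n hn N le_rfl
      have := abs_le.mp this
      linarith [this.1]
    have h1 : Filter.limsup (fun n => ψ n x) Filter.atTop ≤ ψ N x + ε :=
      Filter.limsup_le_of_le (isCoboundedUnder_le_of_eventually_le _ hlb) hub
    have h2 : ψ N x - ε ≤ Filter.limsup (fun n => ψ n x) Filter.atTop :=
      Filter.le_limsup_of_frequently_le hlb.frequently
        (Filter.isBoundedUnder_of_eventually_le hub)
    rw [abs_le]; constructor <;> linarith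
  -- each E N has empty interior
  have hEint : ∀ N, interior (E N) = ∅ := by
    intro N
    by_contra h
    obtain ⟨a, haA, haU⟩ := hA.exists_mem_open isOpen_interior
      (Set.nonempty_iff_ne_empty.mpr h)
    -- an open neighborhood where ψ N is ε-close to ψ N a, inside the interior
    have hopen : IsOpen (interior (E N) ∩ {y | |ψ N y - ψ N a| < ε}) := by
      refine isOpen_interior.inter ?_
      have : Continuous fun y => |ψ N y - ψ N a| :=
        continuous_abs.comp ((hψ N).sub continuous_const)
      exact isOpen_lt this continuous_const
    have hne : (interior (E N) ∩ {y | |ψ N y - ψ N a| < ε}).Nonempty :=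
      ⟨a, haU, by simp [hε0]⟩
    obtain ⟨b, hbB, hbU, hbclose⟩ := hB.exists_mem_open hopen hne
    have ha' : |α - ψ N a| ≤ ε := by
      have := key N a (interior_subset haU)
      rwa [hα a haA] at this
    have hb' : |β - ψ N b| ≤ ε := by
      have := key N b (interior_subset hbU)
      rwa [hβ b hbB] at this
    have : |α - β| < 3 * ε := by
      have h1 := abs_sub_abs_le_abs_sub (α - ψ N a) (β - ψ N a)
      calc |α - β| = |(α - ψ N a) + (ψ N a - ψ N b) + (ψ N b - β)| := by ring_nf
        _ ≤ |α - ψ N a| + |ψ N a - ψ N b| + |ψ N b - β| := by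
            calc |(α - ψ N a) + (ψ N a - ψ N b) + (ψ N b - β)|
                ≤ |(α - ψ N a) + (ψ N a - ψ N b)| + |ψ N b - β| := abs_add_le _ _
              _ ≤ |α - ψ N a| + |ψ N a - ψ N b| + |ψ N b - β| := by
                  have := abs_add_le (α - ψ N a) (ψ N a - ψ N b)
                  linarith
        _ < ε + ε + ε := by
            have h2 : |ψ N a - ψ N b| < ε := by
              rw [abs_sub_comm]; exact hbclose
            have h3 : |ψ N b - β| ≤ ε := by rw [abs_sub_comm]; exact hb'
            linarith
        _ = 3 * ε := by ring
    rw [hεdef] at this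
    linarith
  -- conclude: complement of ⋃ E N is residual and contained in the divergence set
  rw [mem_residual_iff]
  refine ⟨Set.range (fun N => (E N)ᶜ), ?_, ?_, Set.countable_range _, ?_⟩
  · rintro t ⟨N, rfl⟩
    exact (hEclosed N).isOpen_compl
  · rintro t ⟨N, rfl⟩
    rw [← interior_eq_empty_iff_dense_compl]
    exact hEint N
  · intro x hx
    simp only [Set.mem_sInter, Set.mem_range, forall_exists_index] at hx
    intro hconv
    obtain ⟨l, hl⟩ := hconv
    have hc : CauchySeq fun n => ψ n x := hl.cauchySeq
    obtain ⟨N, hN⟩ := Metric.cauchySeq_iff'.mp hc (ε/2) (by linarith)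
    have : x ∈ E N := by
      intro m hm n hn
      have h1 := hN m hm
      have h2 := hN n hn
      rw [Real.dist_eq] at h1 h2
      calc |ψ m x - ψ n x| = |(ψ m x - ψ N x) - (ψ n x - ψ N x)| := by ring_nf
        _ ≤ |ψ m x - ψ N x| + |ψ n x - ψ N x| := abs_sub _ _
        _ ≤ ε := by linarith
    exact hx _ N rfl this
end

section
/- Let X be a compact metric space, f : X → X a continuous map, and φ : X → ℝ continuous. Suppose there exist two dense subsets A and B of X and real numbers α ≠ β such that limsup_{n→∞} (1/n) ∑_{j=0}^{n−1} φ(f^j(x)) = α for all x ∈ A and = β for all x ∈ B. Then the φ-irregular set I_φ = {x ∈ X : the sequence of Birkhoff averages (1/n) ∑_{j=0}^{n−1} φ(f^j(x)) does not converge} is residual in X. -/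
open Filter Topology

private lemma birkhoff_irregular_aux
    {X : Type*} [MetricSpace X] [CompactSpace X] [Nonempty X]
    (f : X → X) (hf : Continuous f)
    (φ : X → ℝ) (hφ : Continuous φ)
    (A B : Set X) (hA : Dense A) (hB : Dense B)
    (α β : ℝ) (hαβ : α < β)
    (hα : ∀ x ∈ A,
      Filter.limsup (fun n => (∑ j ∈ Finset.range n, φ (f^[j] x)) / (n : ℝ)) Filter.atTop = α)
    (hβ : ∀ x ∈ B,
      Filter.limsup (fun n => (∑ j ∈ Finset.range n, φ (f^[j] x)) / (n : ℝ)) Filter.atTop = β) :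
    {x : X | ¬ ∃ l : ℝ, Filter.Tendsto
        (fun n => (∑ j ∈ Finset.range n, φ (f^[j] x)) / (n : ℝ)) Filter.atTop (𝓝 l)}
      ∈ residual X := by
  set a : X → ℕ → ℝ := fun x n => (∑ j ∈ Finset.range n, φ (f^[j] x)) / (n : ℝ) with ha
  have hacont : ∀ n, Continuous fun x => a x n := fun n =>
    (continuous_finset_sum _ fun j _ => hφ.comp (hf.iterate j)).div_const _
  obtain ⟨C, hC⟩ : ∃ C, ∀ x ∈ (Set.univ : Set X), ‖φ x‖ ≤ C :=
    isCompact_univ.exists_bound_of_continuousOn hφ.continuousOn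
  have hC' : ∀ x, |φ x| ≤ C := fun x => hC x (Set.mem_univ x)
  have hC0 : 0 ≤ C := le_trans (abs_nonneg _) (hC' (Classical.arbitrary X))
  have habs : ∀ x n, |a x n| ≤ C := by
    intro x n
    rcases Nat.eq_zero_or_pos n with h0 | hn
    · simp [ha, h0, hC0]
    · have hsum : |∑ j ∈ Finset.range n, φ (f^[j] x)| ≤ n * C := by
        calc |∑ j ∈ Finset.range n, φ (f^[j] x)|
            ≤ ∑ j ∈ Finset.range n, |φ (f^[j] x)| := Finset.abs_sum_le_sum_abs _ _
          _ ≤ ∑ _j ∈ Finset.range n, C := Finset.sum_le_sum fun j _ => hC' _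
          _ = n * C := by simp [Finset.sum_const, nsmul_eq_mul]
      have hn' : (0:ℝ) < n := by exact_mod_cast hn
      rw [ha]
      simp only [abs_div, abs_of_pos hn']
      rw [div_le_iff₀ hn']
      calc |∑ j ∈ Finset.range n, φ (f^[j] x)| ≤ n * C := hsum
        _ = C * n := mul_comm _ _
  have hbdd_le : ∀ x, IsBoundedUnder (· ≤ ·) atTop (a x) := fun x =>
    isBoundedUnder_of ⟨C, fun n => (le_abs_self _).trans (habs x n)⟩
  have hbdd_ge : ∀ x, IsBoundedUnder (· ≥ ·) atTop (a x) := fun x =>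
    isBoundedUnder_of ⟨-C, fun n => neg_le_of_abs_le (habs x n)⟩
  have hcob_le : ∀ x, IsCoboundedUnder (· ≤ ·) atTop (a x) := fun x =>
    (hbdd_ge x).isCoboundedUnder_flip
  set U : ℕ → ℕ → Set X := fun k N => {x | ∃ n, N ≤ n ∧ a x n < α + 1/((k:ℝ)+1)} with hU
  set V : ℕ → ℕ → Set X := fun k N => {x | ∃ n, N ≤ n ∧ β - 1/((k:ℝ)+1) < a x n} with hV
  have hε : ∀ k : ℕ, (0:ℝ) < 1/((k:ℝ)+1) := by intro k; positivity
  have hUopen : ∀ k N, IsOpen (U k N) := by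
    intro k N
    have : U k N = ⋃ n ∈ Set.Ici N, (fun x => a x n) ⁻¹' Set.Iio (α + 1/((k:ℝ)+1)) := by
      ext x; simp [hU]
    rw [this]
    exact isOpen_biUnion fun n _ => isOpen_Iio.preimage (hacont n)
  have hVopen : ∀ k N, IsOpen (V k N) := by
    intro k N
    have : V k N = ⋃ n ∈ Set.Ici N, (fun x => a x n) ⁻¹' Set.Ioi (β - 1/((k:ℝ)+1)) := by
      ext x; simp [hV]
    rw [this]
    exact isOpen_biUnion fun n _ => isOpen_Ioi.preimage (hacont n)
  have hUdense : ∀ k N, Dense (U k N) := by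
    intro k N
    refine Dense.mono ?_ hA
    intro x hx
    have hlt : limsup (a x) atTop < α + 1/((k:ℝ)+1) := by
      rw [hα x hx]; linarith [hε k]
    have hev : ∀ᶠ n in atTop, a x n < α + 1/((k:ℝ)+1) :=
      eventually_lt_of_limsup_lt hlt (hbdd_le x)
    obtain ⟨n, hn, h⟩ := ((eventually_ge_atTop N).and hev).exists
    exact ⟨n, hn, h⟩
  have hVdense : ∀ k N, Dense (V k N) := by
    intro k N
    refine Dense.mono ?_ hB
    intro x hx
    have hlt : β - 1/((k:ℝ)+1) < limsup (a x) atTop := by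
      rw [hβ x hx]; linarith [hε k]
    have hfr : ∃ᶠ n in atTop, β - 1/((k:ℝ)+1) < a x n :=
      frequently_lt_of_lt_limsup (hcob_le x) hlt
    obtain ⟨n, h, hn⟩ := (hfr.and_eventually (eventually_ge_atTop N)).exists
    exact ⟨n, hn, h⟩
  have hT : (⋂ k, ⋂ N, U k N ∩ V k N) ∈ residual X := by
    refine (countable_iInter_mem).2 fun k => (countable_iInter_mem).2 fun N => ?_
    exact inter_mem (residual_of_dense_open (hUopen k N) (hUdense k N))
      (residual_of_dense_open (hVopen k N) (hVdense k N))
  refine mem_of_superset hT ?_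
  intro x hx
  simp only [Set.mem_iInter, Set.mem_inter_iff] at hx
  rintro ⟨l, hl⟩
  have hli : liminf (a x) atTop = l := hl.liminf_eq
  have hls : limsup (a x) atTop = l := hl.limsup_eq
  have h1 : ∀ k : ℕ, l ≤ α + 1/((k:ℝ)+1) := by
    intro k
    have hfreq : ∃ᶠ n in atTop, a x n ≤ α + 1/((k:ℝ)+1) := by
      rw [frequently_atTop]
      intro N
      obtain ⟨n, hn, h⟩ := (hx k N).1
      exact ⟨n, hn, h.le⟩
    have := liminf_le_of_frequently_le hfreq (hbdd_ge x)
    rwa [hli] at this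
  have h2 : ∀ k : ℕ, β - 1/((k:ℝ)+1) ≤ l := by
    intro k
    have hfreq : ∃ᶠ n in atTop, β - 1/((k:ℝ)+1) ≤ a x n := by
      rw [frequently_atTop]
      intro N
      obtain ⟨n, hn, h⟩ := (hx k N).2
      exact ⟨n, hn, h.le⟩
    have := le_limsup_of_frequently_le hfreq (hbdd_le x)
    rwa [hls] at this
  have hlα : l ≤ α := by
    by_contra h
    push_neg at h
    obtain ⟨k, hk⟩ := exists_nat_one_div_lt (sub_pos.2 h)
    linarith [h1 k]
  have hβl : β ≤ l := by
    by_contra h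
    push_neg at h
    obtain ⟨k, hk⟩ := exists_nat_one_div_lt (sub_pos.2 h)
    linarith [h2 k]
  linarith

/-- Theorem A: if the limsup of Birkhoff averages of a continuous observable φ takes two
distinct constant values on two dense subsets, then the φ-irregular set is residual. -/
theorem irregular_set_residual_of_two_dense_values
    {X : Type*} [MetricSpace X] [CompactSpace X]
    (f : X → X) (hf : Continuous f)
    (φ : X → ℝ) (hφ : Continuous φ)
    (A B : Set X) (hA : Dense A) (hB : Dense B)
    (α β : ℝ) (hαβ : α ≠ β)
    (hα : ∀ x ∈ A,
      Filter.limsup (fun n => (∑ j ∈ Finset.range n, φ (f^[j] x)) / (n : ℝ)) Filter.atTop = α)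
    (hβ : ∀ x ∈ B,
      Filter.limsup (fun n => (∑ j ∈ Finset.range n, φ (f^[j] x)) / (n : ℝ)) Filter.atTop = β) :
    {x : X | ¬ ∃ l : ℝ, Filter.Tendsto
        (fun n => (∑ j ∈ Finset.range n, φ (f^[j] x)) / (n : ℝ)) Filter.atTop (𝓝 l)}
      ∈ residual X := by
  rcases isEmpty_or_nonempty X with hX | hX
  · have : {x : X | ¬ ∃ l : ℝ, Filter.Tendsto
        (fun n => (∑ j ∈ Finset.range n, φ (f^[j] x)) / (n : ℝ)) Filter.atTop (𝓝 l)}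
        = Set.univ := Set.eq_univ_of_forall fun x => (IsEmpty.false x).elim
    rw [this]; exact univ_mem
  · rcases hαβ.lt_or_gt with h | h
    · exact birkhoff_irregular_aux f hf φ hφ A B hA hB α β h hα hβ
    · exact birkhoff_irregular_aux f hf φ hφ B A hB hA β α h hβ hα
end

section
/- Let X be a compact metric space, f : X → X a continuous map, and φ : X → ℝ continuous. Suppose there exist two fixed points p₁ ≠ p₂ of f with φ(p₁) ≠ φ(p₂), such that the stable sets W^s(p₁) = {x : f^n(x) → p₁} and W^s(p₂) = {x : f^n(x) → p₂} are both dense in X. Then the set of φ-irregular points {x ∈ X : the Birkhoff averages (1/n) ∑_{j=0}^{n−1} φ(f^j(x)) do not converge} is residual in X. -/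
open Filter Topology

private lemma birkhoff_tendsto {X : Type*} [MetricSpace X]
    (f : X → X) (φ : X → ℝ) (hφ : Continuous φ) (p : X) {x : X}
    (hx : Filter.Tendsto (fun n : ℕ => f^[n] x) Filter.atTop (𝓝 p)) :
    Filter.Tendsto (fun n => (∑ j ∈ Finset.range n, φ (f^[j] x)) / (n : ℝ))
      Filter.atTop (𝓝 (φ p)) := by
  have h : Filter.Tendsto (fun n : ℕ => φ (f^[n] x)) Filter.atTop (𝓝 (φ p)) :=
    (hφ.tendsto p).comp hx
  have := h.cesaro
  simpa [div_eq_inv_mul] using this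

private lemma dense_open_aux {X : Type*} [MetricSpace X] [CompactSpace X]
    (f : X → X) (hf : Continuous f) (φ : X → ℝ) (hφ : Continuous φ) (p : X)
    (hd : Dense {x : X | Filter.Tendsto (fun n : ℕ => f^[n] x) Filter.atTop (𝓝 p)})
    (r : ℝ) (hr : φ p < r) (n : ℕ) :
    IsOpen {x : X | ∃ m, n ≤ m ∧ (∑ j ∈ Finset.range m, φ (f^[j] x)) / (m : ℝ) < r} ∧
    Dense {x : X | ∃ m, n ≤ m ∧ (∑ j ∈ Finset.range m, φ (f^[j] x)) / (m : ℝ) < r} := by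
  have hcont : ∀ m : ℕ, Continuous fun x => (∑ j ∈ Finset.range m, φ (f^[j] x)) / (m : ℝ) := by
    intro m
    exact (continuous_finset_sum _ fun j _ => hφ.comp (hf.iterate j)).div_const _
  constructor
  · have : {x : X | ∃ m, n ≤ m ∧ (∑ j ∈ Finset.range m, φ (f^[j] x)) / (m : ℝ) < r} =
        ⋃ m ∈ {m : ℕ | n ≤ m}, {x : X | (∑ j ∈ Finset.range m, φ (f^[j] x)) / (m : ℝ) < r} := by
      ext x; simp [Set.mem_iUnion]
    rw [this]
    exact isOpen_biUnion fun m _ => isOpen_lt (hcont m) continuous_const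
  · intro x
    rw [Metric.mem_closure_iff]
    intro ε hε
    obtain ⟨y, hy, hyx⟩ := Metric.dense_iff.mp hd x ε hε
    have htend := birkhoff_tendsto f φ hφ p hyx
    have : ∀ᶠ m in atTop, (∑ j ∈ Finset.range m, φ (f^[j] y)) / (m : ℝ) < r :=
      htend.eventually_lt_const hr
    obtain ⟨m, hm1, hm2⟩ := ((eventually_ge_atTop n).and this).exists
    exact ⟨y, ⟨m, hm1, hm2⟩, Metric.mem_ball'.mp hy⟩

private lemma dense_open_aux' {X : Type*} [MetricSpace X] [CompactSpace X]
    (f : X → X) (hf : Continuous f) (φ : X → ℝ) (hφ : Continuous φ) (p : X)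
    (hd : Dense {x : X | Filter.Tendsto (fun n : ℕ => f^[n] x) Filter.atTop (𝓝 p)})
    (r : ℝ) (hr : r < φ p) (n : ℕ) :
    IsOpen {x : X | ∃ m, n ≤ m ∧ r < (∑ j ∈ Finset.range m, φ (f^[j] x)) / (m : ℝ)} ∧
    Dense {x : X | ∃ m, n ≤ m ∧ r < (∑ j ∈ Finset.range m, φ (f^[j] x)) / (m : ℝ)} := by
  have h := dense_open_aux f hf (-φ) (hφ.neg) p hd (-r) (by simpa using hr) n
  have heq : {x : X | ∃ m, n ≤ m ∧ r < (∑ j ∈ Finset.range m, φ (f^[j] x)) / (m : ℝ)} =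
      {x : X | ∃ m, n ≤ m ∧ (∑ j ∈ Finset.range m, (-φ) (f^[j] x)) / (m : ℝ) < -r} := by
    ext x
    refine exists_congr fun m => and_congr_right fun _ => ?_
    rw [show (∑ j ∈ Finset.range m, (-φ) (f^[j] x)) = -∑ j ∈ Finset.range m, φ (f^[j] x) by
      simp, neg_div, neg_lt_neg_iff]
  rw [heq]
  exact h

/-- Corollary (abstract version of the partially hyperbolic case): two fixed points with
distinct φ-values and dense stable sets force the φ-irregular set to be residual. -/
theorem irregular_residual_of_two_dense_stable_sets
    {X : Type*} [MetricSpace X] [CompactSpace X]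
    (f : X → X) (hf : Continuous f)
    (φ : X → ℝ) (hφ : Continuous φ)
    (p₁ p₂ : X) (hp₁ : f p₁ = p₁) (hp₂ : f p₂ = p₂) (hpne : p₁ ≠ p₂)
    (hφne : φ p₁ ≠ φ p₂)
    (hd₁ : Dense {x : X | Filter.Tendsto (fun n : ℕ => f^[n] x) Filter.atTop (𝓝 p₁)})
    (hd₂ : Dense {x : X | Filter.Tendsto (fun n : ℕ => f^[n] x) Filter.atTop (𝓝 p₂)}) :
    {x : X | ¬ ∃ l : ℝ, Filter.Tendsto
        (fun n => (∑ j ∈ Finset.range n, φ (f^[j] x)) / (n : ℝ)) Filter.atTop (𝓝 l)}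
      ∈ residual X := by
  -- WLOG-style: choose the point with smaller φ value as q₁
  obtain ⟨q₁, q₂, hdq₁, hdq₂, hlt⟩ :
      ∃ q₁ q₂ : X,
        Dense {x : X | Filter.Tendsto (fun n : ℕ => f^[n] x) Filter.atTop (𝓝 q₁)} ∧
        Dense {x : X | Filter.Tendsto (fun n : ℕ => f^[n] x) Filter.atTop (𝓝 q₂)} ∧
        φ q₁ < φ q₂ := by
    rcases lt_or_gt_of_ne hφne with h | h
    · exact ⟨p₁, p₂, hd₁, hd₂, h⟩
    · exact ⟨p₂, p₁, hd₂, hd₁, h⟩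
  set a := φ q₁
  set b := φ q₂
  set c : ℝ := (2 * a + b) / 3 with hc
  set d : ℝ := (a + 2 * b) / 3 with hd
  have hac : a < c := by rw [hc]; linarith
  have hcd : c < d := by rw [hc, hd]; linarith
  have hdb : d < b := by rw [hd]; linarith
  set O : ℕ → Set X := fun n =>
    {x : X | ∃ m, n ≤ m ∧ (∑ j ∈ Finset.range m, φ (f^[j] x)) / (m : ℝ) < c} with hO
  set P : ℕ → Set X := fun n =>
    {x : X | ∃ m, n ≤ m ∧ d < (∑ j ∈ Finset.range m, φ (f^[j] x)) / (m : ℝ)} with hP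
  have hOmem : ∀ n, O n ∈ residual X := fun n => by
    obtain ⟨ho, hdn⟩ := dense_open_aux f hf φ hφ q₁ hdq₁ c hac n
    exact residual_of_dense_open ho hdn
  have hPmem : ∀ n, P n ∈ residual X := fun n => by
    obtain ⟨ho, hdn⟩ := dense_open_aux' f hf φ hφ q₂ hdq₂ d hdb n
    exact residual_of_dense_open ho hdn
  have hG : (⋂ n, O n ∩ P n) ∈ residual X :=
    (countable_iInter_mem.mpr fun n => inter_mem (hOmem n) (hPmem n))
  refine Filter.mem_of_superset hG ?_
  intro x hx
  simp only [Set.mem_iInter, Set.mem_inter_iff] at hx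
  rintro ⟨l, hl⟩
  set ε : ℝ := (d - c) / 2 with hε
  have hεpos : 0 < ε := by rw [hε]; linarith
  have hev : ∀ᶠ m : ℕ in atTop,
      |(∑ j ∈ Finset.range m, φ (f^[j] x)) / (m : ℝ) - l| < ε := by
    have := Metric.tendsto_atTop.mp hl ε hεpos
    obtain ⟨N, hN⟩ := this
    exact eventually_atTop.mpr ⟨N, fun m hm => by simpa [Real.dist_eq] using hN m hm⟩
  obtain ⟨N, hN⟩ := eventually_atTop.mp hev
  obtain ⟨m₁, hm₁, hlt₁⟩ := (hx N).1
  obtain ⟨m₂, hm₂, hlt₂⟩ := (hx N).2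
  have h₁ := hN m₁ hm₁
  have h₂ := hN m₂ hm₂
  rw [abs_lt] at h₁ h₂
  have : l < c + ε := by linarith
  have : d - ε < l := by linarith
  rw [hε] at *
  linarith
end

section
/- Let X be a compact metric space, f : X → X a continuous minimal map, k ≥ 2, and A : X → GL(k, ℝ) a continuous cocycle with A^n(x) = A(f^{n−1}(x))···A(x). If there exist points x₁, x₂ ∈ X at both of which the limits λ_i = lim_{n→∞} (1/n) log ‖A^n(x_i)‖ exist and satisfy λ₁ < λ₂, then there is a residual subset R ⊆ X such that for every x ∈ R, liminf_{n→∞} (1/n) log ‖A^n(x)‖ < limsup_{n→∞} (1/n) log ‖A^n(x)‖. -/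
open Filter Topology

/-- Corollary (Lyapunov irregular points): for a continuous invertible cocycle over a
minimal map, if the largest Lyapunov exponent limits exist at two points and differ, then
on a residual set the exponent limit fails to exist (liminf < limsup). -/
theorem lyapunov_irregular_residual_of_minimal
    {X : Type*} [MetricSpace X] [CompactSpace X]
    (f : X → X) (hf : Continuous f)
    (hmin : ∀ x : X, Dense (Set.range fun n : ℕ => f^[n] x))
    (k : ℕ) (hk : 2 ≤ k)
    (A Ainv : X → ((Fin k → ℝ) →L[ℝ] (Fin k → ℝ)))
    (hA : Continuous A) (hAinv : Continuous Ainv)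
    (hinv : ∀ x, A x * Ainv x = 1 ∧ Ainv x * A x = 1)
    (An : ℕ → X → ((Fin k → ℝ) →L[ℝ] (Fin k → ℝ)))
    (hAn0 : ∀ x, An 0 x = 1)
    (hAnS : ∀ n x, An (n + 1) x = An n (f x) * A x)
    (x₁ x₂ : X) (l₁ l₂ : ℝ) (hl : l₁ < l₂)
    (h₁ : Filter.Tendsto (fun n => Real.log ‖An n x₁‖ / (n : ℝ)) Filter.atTop (𝓝 l₁))
    (h₂ : Filter.Tendsto (fun n => Real.log ‖An n x₂‖ / (n : ℝ)) Filter.atTop (𝓝 l₂)) :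
    ∃ R : Set X, R ∈ residual X ∧ ∀ x ∈ R,
      Filter.liminf (fun n => Real.log ‖An n x‖ / (n : ℝ)) Filter.atTop <
        Filter.limsup (fun n => Real.log ‖An n x‖ / (n : ℝ)) Filter.atTop := by
  haveI : Nonempty X := ⟨x₁⟩
  haveI : NeZero k := ⟨by omega⟩
  haveI : Nontrivial (Fin k) := ⟨⟨0, by omega⟩, ⟨1, by omega⟩, by simp [Fin.ext_iff]⟩
  -- norm of the identity
  have h1norm : ‖(1 : (Fin k → ℝ) →L[ℝ] (Fin k → ℝ))‖ = 1 := by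
    rw [ContinuousLinearMap.one_def]; exact ContinuousLinearMap.norm_id
  have h1ne : (1 : (Fin k → ℝ) →L[ℝ] (Fin k → ℝ)) ≠ 0 := by
    intro h
    rw [h, norm_zero] at h1norm
    exact one_ne_zero h1norm.symm
  -- continuity of the cocycle iterates
  have hAnc : ∀ n, Continuous (An n) := by
    intro n
    induction n with
    | zero =>
      have e : An 0 = fun _ => 1 := funext hAn0
      rw [e]; exact continuous_const
    | succ n ih =>
      have e : An (n + 1) = fun x => An n (f x) * A x := funext (hAnS n)
      rw [e]; exact (ih.comp hf).mul hA
  -- global bounds on ‖A‖ and ‖Ainv‖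
  obtain ⟨z₁, _, hz₁⟩ := isCompact_univ.exists_isMaxOn (Set.univ_nonempty)
    (hA.norm.continuousOn)
  obtain ⟨z₂, _, hz₂⟩ := isCompact_univ.exists_isMaxOn (Set.univ_nonempty)
    (hAinv.norm.continuousOn)
  set D : ℝ := max ‖A z₁‖ 1 with hD_def
  set C : ℝ := max ‖Ainv z₂‖ 1 with hC_def
  have hD1 : (1 : ℝ) ≤ D := le_max_right _ _
  have hC1 : (1 : ℝ) ≤ C := le_max_right _ _
  have hDpos : (0 : ℝ) < D := lt_of_lt_of_le one_pos hD1
  have hCpos : (0 : ℝ) < C := lt_of_lt_of_le one_pos hC1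
  have hDle : ∀ x, ‖A x‖ ≤ D := fun x => le_trans (hz₁ (Set.mem_univ x)) (le_max_left _ _)
  have hCle : ∀ x, ‖Ainv x‖ ≤ C := fun x => le_trans (hz₂ (Set.mem_univ x)) (le_max_left _ _)
  -- right inverses with norm bounds
  have hB : ∀ n x, ∃ B, An n x * B = 1 ∧ ‖B‖ ≤ C ^ n := by
    intro n
    induction n with
    | zero =>
      intro x
      exact ⟨1, by rw [hAn0, one_mul], by rw [h1norm, pow_zero]⟩
    | succ n ih =>
      intro x
      obtain ⟨B, hB1, hB2⟩ := ih (f x)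
      refine ⟨Ainv x * B, ?_, ?_⟩
      · rw [hAnS, mul_assoc, ← mul_assoc (A x), (hinv x).1, one_mul, hB1]
      · calc ‖Ainv x * B‖ ≤ ‖Ainv x‖ * ‖B‖ := norm_mul_le _ _
          _ ≤ C * C ^ n := by
              apply mul_le_mul (hCle x) hB2 (norm_nonneg _) (le_of_lt hCpos)
          _ = C ^ (n + 1) := by rw [pow_succ]; ring
  -- positivity of norms
  have hAnpos : ∀ n x, 0 < ‖An n x‖ := by
    intro n x
    rcases hB n x with ⟨B, hB1, _⟩
    apply norm_pos_iff.mpr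
    intro h
    rw [h, zero_mul] at hB1
    exact h1ne hB1.symm
  have hApos : ∀ x, 0 < ‖A x‖ := by
    intro x
    apply norm_pos_iff.mpr
    intro h
    have := (hinv x).1
    rw [h, zero_mul] at this
    exact h1ne this.symm
  have hAinvpos : ∀ x, 0 < ‖Ainv x‖ := by
    intro x
    apply norm_pos_iff.mpr
    intro h
    have := (hinv x).2
    rw [h, zero_mul] at this
    exact h1ne this.symm
  -- uniform lower bound of the exponents
  have hlow : ∀ n x, -Real.log C ≤ Real.log ‖An n x‖ / (n : ℝ) := by
    intro n x
    rcases Nat.eq_zero_or_pos n with hn | hn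
    · subst hn
      simp only [Nat.cast_zero, div_zero]
      have : (0 : ℝ) ≤ Real.log C := Real.log_nonneg hC1
      linarith
    · have hnR : (0 : ℝ) < (n : ℝ) := by exact_mod_cast hn
      rcases hB n x with ⟨B, hB1, hB2⟩
      have h1le : (1 : ℝ) ≤ ‖An n x‖ * C ^ n := by
        calc (1 : ℝ) = ‖(1 : (Fin k → ℝ) →L[ℝ] (Fin k → ℝ))‖ := h1norm.symm
          _ = ‖An n x * B‖ := by rw [hB1]
          _ ≤ ‖An n x‖ * ‖B‖ := norm_mul_le _ _
          _ ≤ ‖An n x‖ * C ^ n := by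
              apply mul_le_mul_of_nonneg_left hB2 (norm_nonneg _)
      have hpow : (0 : ℝ) < C ^ n := pow_pos hCpos n
      have hinvle : (C ^ n)⁻¹ ≤ ‖An n x‖ := by
        rw [inv_le_iff_one_le_mul₀' hpow]
        linarith [h1le]
      have hloglog : Real.log (C ^ n)⁻¹ ≤ Real.log ‖An n x‖ :=
        Real.log_le_log (inv_pos.mpr hpow) hinvle
      rw [Real.log_inv, Real.log_pow] at hloglog
      rw [le_div_iff₀ hnR]
      push_cast at hloglog ⊢
      linarith
  -- uniform upper bound of the exponents
  have hAnD : ∀ n x, ‖An n x‖ ≤ D ^ n := by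
    intro n
    induction n with
    | zero => intro x; rw [hAn0, h1norm, pow_zero]
    | succ n ih =>
      intro x
      calc ‖An (n + 1) x‖ = ‖An n (f x) * A x‖ := by rw [hAnS]
        _ ≤ ‖An n (f x)‖ * ‖A x‖ := norm_mul_le _ _
        _ ≤ D ^ n * D := by
            apply mul_le_mul (ih (f x)) (hDle x) (norm_nonneg _) (le_of_lt (pow_pos hDpos n))
        _ = D ^ (n + 1) := (pow_succ D n).symm
  have hup : ∀ n x, Real.log ‖An n x‖ / (n : ℝ) ≤ Real.log D := by
    intro n x
    rcases Nat.eq_zero_or_pos n with hn | hn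
    · subst hn
      simp only [Nat.cast_zero, div_zero]
      exact Real.log_nonneg hD1
    · have hnR : (0 : ℝ) < (n : ℝ) := by exact_mod_cast hn
      have := Real.log_le_log (hAnpos n x) (hAnD n x)
      rw [Real.log_pow] at this
      rw [div_le_iff₀ hnR]
      push_cast at this ⊢
      linarith
  -- the limit propagates along the orbit
  have hstep : ∀ (x : X) (l : ℝ),
      Tendsto (fun n => Real.log ‖An n x‖ / (n : ℝ)) atTop (𝓝 l) →
      Tendsto (fun n => Real.log ‖An n (f x)‖ / (n : ℝ)) atTop (𝓝 l) := by
    intro x l hx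
    have hshift : ∀ c : ℝ,
        Tendsto (fun n : ℕ => (Real.log ‖An (n + 1) x‖ + c) / (n : ℝ)) atTop (𝓝 l) := by
      intro c
      have e1 : Tendsto (fun n : ℕ => Real.log ‖An (n + 1) x‖ / ((n : ℝ) + 1))
          atTop (𝓝 l) := by
        have := hx.comp (tendsto_add_atTop_nat 1)
        simpa [Function.comp_def] using this
      have e2 : Tendsto (fun n : ℕ => ((n : ℝ) + 1) / (n : ℝ)) atTop (𝓝 1) := by
        have h0 : Tendsto (fun n : ℕ => 1 + 1 / (n : ℝ)) atTop (𝓝 (1 + 0)) :=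
          tendsto_const_nhds.add tendsto_one_div_atTop_nhds_zero_nat
        rw [add_zero] at h0
        apply h0.congr'
        filter_upwards [eventually_ge_atTop 1] with n hn
        have hnR : (n : ℝ) ≠ 0 := by
          have : (0 : ℝ) < (n : ℝ) := by exact_mod_cast hn
          linarith
        field_simp
      have e3 : Tendsto (fun n : ℕ => c / (n : ℝ)) atTop (𝓝 0) :=
        tendsto_const_div_atTop_nhds_zero_nat c
      have e4 := (e1.mul e2).add e3
      rw [mul_one, add_zero] at e4
      apply e4.congr'
      filter_upwards [eventually_ge_atTop 1] with n hn
      have hnR : (n : ℝ) ≠ 0 := by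
        have : (0 : ℝ) < (n : ℝ) := by exact_mod_cast hn
        linarith
      have hn1R : ((n : ℝ) + 1) ≠ 0 := by positivity
      field_simp
      try ring
    have key1 : ∀ n, An n (f x) = An (n + 1) x * Ainv x := by
      intro n
      rw [hAnS, mul_assoc, (hinv x).1, mul_one]
    have hub : ∀ n, Real.log ‖An n (f x)‖ ≤ Real.log ‖An (n + 1) x‖ + Real.log ‖Ainv x‖ := by
      intro n
      have h1 : ‖An n (f x)‖ ≤ ‖An (n + 1) x‖ * ‖Ainv x‖ := by
        rw [key1]; exact norm_mul_le _ _
      calc Real.log ‖An n (f x)‖ ≤ Real.log (‖An (n + 1) x‖ * ‖Ainv x‖) :=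
            Real.log_le_log (hAnpos n (f x)) h1
        _ = Real.log ‖An (n + 1) x‖ + Real.log ‖Ainv x‖ :=
            Real.log_mul (ne_of_gt (hAnpos (n + 1) x)) (ne_of_gt (hAinvpos x))
    have hlb : ∀ n, Real.log ‖An (n + 1) x‖ - Real.log ‖A x‖ ≤ Real.log ‖An n (f x)‖ := by
      intro n
      have h1 : ‖An (n + 1) x‖ ≤ ‖An n (f x)‖ * ‖A x‖ := by
        rw [hAnS]; exact norm_mul_le _ _
      have h2 : Real.log ‖An (n + 1) x‖ ≤ Real.log ‖An n (f x)‖ + Real.log ‖A x‖ := by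
        calc Real.log ‖An (n + 1) x‖ ≤ Real.log (‖An n (f x)‖ * ‖A x‖) :=
              Real.log_le_log (hAnpos (n + 1) x) h1
          _ = Real.log ‖An n (f x)‖ + Real.log ‖A x‖ :=
              Real.log_mul (ne_of_gt (hAnpos n (f x))) (ne_of_gt (hApos x))
      linarith
    apply tendsto_of_tendsto_of_tendsto_of_le_of_le'
      (hshift (-Real.log ‖A x‖)) (hshift (Real.log ‖Ainv x‖))
    · filter_upwards [eventually_ge_atTop 1] with n hn
      have hnR : (0 : ℝ) < (n : ℝ) := by exact_mod_cast hn
      exact div_le_div_of_nonneg_right (by linarith [hlb n]) hnR.le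
    · filter_upwards [eventually_ge_atTop 1] with n hn
      have hnR : (0 : ℝ) < (n : ℝ) := by exact_mod_cast hn
      exact div_le_div_of_nonneg_right (hub n) hnR.le
  -- limits along the two dense orbits
  have horb1 : ∀ m, Tendsto (fun n => Real.log ‖An n (f^[m] x₁)‖ / (n : ℝ)) atTop (𝓝 l₁) := by
    intro m
    induction m with
    | zero => simpa using h₁
    | succ m ih =>
      have := hstep _ _ ih
      simpa [Function.iterate_succ_apply'] using this
  have horb2 : ∀ m, Tendsto (fun n => Real.log ‖An n (f^[m] x₂)‖ / (n : ℝ)) atTop (𝓝 l₂) := by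
    intro m
    induction m with
    | zero => simpa using h₂
    | succ m ih =>
      have := hstep _ _ ih
      simpa [Function.iterate_succ_apply'] using this
  -- intermediate values
  set a : ℝ := (2 * l₁ + l₂) / 3 with ha_def
  set b : ℝ := (l₁ + 2 * l₂) / 3 with hb_def
  have hl₁a : l₁ < a := by rw [ha_def]; linarith
  have hab : a < b := by rw [ha_def, hb_def]; linarith
  have hbl₂ : b < l₂ := by rw [hb_def]; linarith
  -- the open dense sets
  set U : ℕ → Set X := fun N =>
    ⋃ (n : ℕ) (_ : N + 1 ≤ n), {x | ‖An n x‖ < Real.exp ((n : ℝ) * a)} with hU_def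
  set V : ℕ → Set X := fun N =>
    ⋃ (n : ℕ) (_ : N + 1 ≤ n), {x | Real.exp ((n : ℝ) * b) < ‖An n x‖} with hV_def
  have hUopen : ∀ N, IsOpen (U N) := by
    intro N
    apply isOpen_iUnion; intro n; apply isOpen_iUnion; intro _
    exact isOpen_lt (hAnc n).norm continuous_const
  have hVopen : ∀ N, IsOpen (V N) := by
    intro N
    apply isOpen_iUnion; intro n; apply isOpen_iUnion; intro _
    exact isOpen_lt continuous_const (hAnc n).norm
  have hUdense : ∀ N, Dense (U N) := by
    intro N
    apply (hmin x₁).mono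
    rintro y ⟨m, rfl⟩
    have hev : ∀ᶠ n : ℕ in atTop, Real.log ‖An n (f^[m] x₁)‖ / (n : ℝ) < a :=
      (horb1 m).eventually_lt_const hl₁a
    obtain ⟨n, hn1, hn2⟩ := ((eventually_ge_atTop (N + 1)).and hev).exists
    refine Set.mem_iUnion.mpr ⟨n, Set.mem_iUnion.mpr ⟨hn1, ?_⟩⟩
    have hnR : (0 : ℝ) < (n : ℝ) := by
      have : 1 ≤ n := le_trans (Nat.le_add_left 1 N) hn1
      exact_mod_cast this
    have hlog : Real.log ‖An n (f^[m] x₁)‖ < (n : ℝ) * a := by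
      have := (div_lt_iff₀ hnR).mp hn2
      linarith
    exact (Real.log_lt_iff_lt_exp (hAnpos n _)).mp hlog
  have hVdense : ∀ N, Dense (V N) := by
    intro N
    apply (hmin x₂).mono
    rintro y ⟨m, rfl⟩
    have hev : ∀ᶠ n : ℕ in atTop, b < Real.log ‖An n (f^[m] x₂)‖ / (n : ℝ) :=
      (horb2 m).eventually_const_lt hbl₂
    obtain ⟨n, hn1, hn2⟩ := ((eventually_ge_atTop (N + 1)).and hev).exists
    refine Set.mem_iUnion.mpr ⟨n, Set.mem_iUnion.mpr ⟨hn1, ?_⟩⟩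
    have hnR : (0 : ℝ) < (n : ℝ) := by
      have : 1 ≤ n := le_trans (Nat.le_add_left 1 N) hn1
      exact_mod_cast this
    have hlog : (n : ℝ) * b < Real.log ‖An n (f^[m] x₂)‖ := by
      have := (lt_div_iff₀ hnR).mp hn2
      linarith
    exact (Real.lt_log_iff_exp_lt (hAnpos n _)).mp hlog
  refine ⟨(⋂ N, U N) ∩ (⋂ N, V N), ?_, ?_⟩
  · apply inter_mem
    · exact countable_iInter_mem.mpr fun N => residual_of_dense_open (hUopen N) (hUdense N)
    · exact countable_iInter_mem.mpr fun N => residual_of_dense_open (hVopen N) (hVdense N)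
  · rintro x ⟨hxU, hxV⟩
    have hfreqU : ∃ᶠ n : ℕ in atTop, Real.log ‖An n x‖ / (n : ℝ) ≤ a := by
      rw [frequently_atTop]
      intro N
      have := Set.mem_iInter.mp hxU N
      obtain ⟨n, hn⟩ := Set.mem_iUnion.mp this
      obtain ⟨hn1, hn2⟩ := Set.mem_iUnion.mp hn
      refine ⟨n, le_trans (Nat.le_succ N) hn1, ?_⟩
      have hnR : (0 : ℝ) < (n : ℝ) := by
        have : 1 ≤ n := le_trans (Nat.le_add_left 1 N) hn1
        exact_mod_cast this
      have hlog : Real.log ‖An n x‖ < (n : ℝ) * a :=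
        (Real.log_lt_iff_lt_exp (hAnpos n x)).mpr hn2
      apply le_of_lt
      rw [div_lt_iff₀ hnR]
      linarith
    have hfreqV : ∃ᶠ n : ℕ in atTop, b ≤ Real.log ‖An n x‖ / (n : ℝ) := by
      rw [frequently_atTop]
      intro N
      have := Set.mem_iInter.mp hxV N
      obtain ⟨n, hn⟩ := Set.mem_iUnion.mp this
      obtain ⟨hn1, hn2⟩ := Set.mem_iUnion.mp hn
      refine ⟨n, le_trans (Nat.le_succ N) hn1, ?_⟩
      have hnR : (0 : ℝ) < (n : ℝ) := by
        have : 1 ≤ n := le_trans (Nat.le_add_left 1 N) hn1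
        exact_mod_cast this
      have hlog : (n : ℝ) * b < Real.log ‖An n x‖ :=
        (Real.lt_log_iff_exp_lt (hAnpos n x)).mpr hn2
      apply le_of_lt
      rw [lt_div_iff₀ hnR]
      linarith
    have hbddlow : IsBoundedUnder (· ≥ ·) atTop (fun n : ℕ => Real.log ‖An n x‖ / (n : ℝ)) :=
      isBoundedUnder_of ⟨-Real.log C, fun n => hlow n x⟩
    have hbddup : IsBoundedUnder (· ≤ ·) atTop (fun n : ℕ => Real.log ‖An n x‖ / (n : ℝ)) :=
      isBoundedUnder_of ⟨Real.log D, fun n => hup n x⟩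
    calc liminf (fun n : ℕ => Real.log ‖An n x‖ / (n : ℝ)) atTop ≤ a :=
          liminf_le_of_frequently_le hfreqU hbddlow
      _ < b := hab
      _ ≤ limsup (fun n : ℕ => Real.log ‖An n x‖ / (n : ℝ)) atTop :=
          le_limsup_of_frequently_le hfreqV hbddup
end

section
/- Let X be a compact metric space, f : X → X a continuous map, φ : X → ℝ continuous, and μ₁, μ₂ two f-invariant Borel probability measures with dense ergodic basins and ∫φ dμ₁ ≠ ∫φ dμ₂. For each N ≥ 1 let E_N(μ) = {x ∈ X : ∃ n > N with |(1/n) ∑_{j=0}^{n−1} φ(f^j(x)) − ∫φ dμ| < 1/N}. Then for every N ≥ 1 the set E_N(μ₁) ∩ E_N(μ₂) is open and dense in X, and the intersection ⋂_{N≥1} E_N(μ₁) ∩ E_N(μ₂) is contained in the set of φ-irregular points. -/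
open Filter Topology MeasureTheory

/-- The ergodic basin of a Borel probability measure (weak* convergence of the empirical
measures, tested against continuous functions). -/
def ergodicBasin {X : Type*} [MetricSpace X] [CompactSpace X] [MeasurableSpace X]
    (f : X → X) (μ : Measure X) : Set X :=
  {x : X | ∀ g : C(X, ℝ), Filter.Tendsto
      (fun n => (∑ j ∈ Finset.range n, g (f^[j] x)) / (n : ℝ)) Filter.atTop (𝓝 (∫ z, g z ∂μ))}

/-- If a sequence converges to `l` and gets within `1/N` of `I` beyond every `N ≥ 1`,
then `l = I`. -/
lemma limit_eq_of_freq (a : ℕ → ℝ) (l I : ℝ)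
    (hl : Filter.Tendsto a Filter.atTop (𝓝 l))
    (h : ∀ N : ℕ, 1 ≤ N → ∃ n : ℕ, N < n ∧ |a n - I| < 1 / (N : ℝ)) : l = I := by
  have habs : ∀ ε : ℝ, 0 < ε → |l - I| ≤ ε := by
    intro ε hε
    rw [Metric.tendsto_atTop] at hl
    obtain ⟨M, hM⟩ := hl (ε / 2) (by positivity)
    obtain ⟨k, hk⟩ := exists_nat_one_div_lt (show (0:ℝ) < ε / 2 by positivity)
    set N := max (k + 1) (max M 1) with hN
    obtain ⟨n, hn, hna⟩ := h N (le_trans (le_max_right _ _) (le_max_right _ _))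
    have h1 : |a n - l| < ε / 2 := by
      have := hM n (le_trans (le_trans (le_max_left _ _) (le_max_right _ _)) hn.le)
      rwa [Real.dist_eq] at this
    have h2 : (1 : ℝ) / N ≤ 1 / (k + 1 : ℝ) := by
      apply one_div_le_one_div_of_le (by positivity)
      exact_mod_cast le_max_left _ _
    have h3 : |a n - I| < ε / 2 := lt_of_lt_of_le hna (h2.trans hk.le)
    calc |l - I| ≤ |l - a n| + |a n - I| := abs_sub_le _ _ _
      _ ≤ ε / 2 + ε / 2 := by
          rw [abs_sub_comm]
          exact add_le_add h1.le h3.le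
      _ = ε := by ring
  have : |l - I| ≤ 0 := le_of_forall_pos_le_add (by simpa using habs)
  have := abs_nonpos_iff.mp this
  linarith [sub_eq_zero.mp this]

/-- Alternative proof scheme of Corollary B: the sets E_N(μ₁) ∩ E_N(μ₂) are open and dense,
and their intersection consists of φ-irregular points. -/
theorem open_dense_EN_and_contained_in_irregular
    {X : Type*} [MetricSpace X] [CompactSpace X] [MeasurableSpace X] [BorelSpace X]
    (f : X → X) (hf : Continuous f)
    (φ : X → ℝ) (hφ : Continuous φ)
    (μ₁ μ₂ : Measure X) [IsProbabilityMeasure μ₁] [IsProbabilityMeasure μ₂]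
    (hinv₁ : μ₁.map f = μ₁) (hinv₂ : μ₂.map f = μ₂)
    (hd₁ : Dense (ergodicBasin f μ₁)) (hd₂ : Dense (ergodicBasin f μ₂))
    (hne : (∫ z, φ z ∂μ₁) ≠ (∫ z, φ z ∂μ₂))
    (E : Measure X → ℕ → Set X)
    (hE : ∀ μ N, E μ N = {x : X | ∃ n : ℕ, N < n ∧
      |(∑ j ∈ Finset.range n, φ (f^[j] x)) / (n : ℝ) - ∫ z, φ z ∂μ| < 1 / (N : ℝ)}) :
    (∀ N : ℕ, 1 ≤ N → IsOpen (E μ₁ N ∩ E μ₂ N) ∧ Dense (E μ₁ N ∩ E μ₂ N)) ∧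
    (⋂ N ∈ {N : ℕ | 1 ≤ N}, E μ₁ N ∩ E μ₂ N) ⊆
      {x : X | ¬ ∃ l : ℝ, Filter.Tendsto
        (fun n => (∑ j ∈ Finset.range n, φ (f^[j] x)) / (n : ℝ)) Filter.atTop (𝓝 l)} := by
  have hcont : ∀ n : ℕ, Continuous (fun x : X =>
      (∑ j ∈ Finset.range n, φ (f^[j] x)) / (n : ℝ)) := fun n =>
    (continuous_finset_sum _ fun j _ => hφ.comp (hf.iterate j)).div_const _
  have hopen : ∀ (μ : Measure X) (N : ℕ), IsOpen (E μ N) := by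
    intro μ N
    rw [hE]
    have heq : {x : X | ∃ n : ℕ, N < n ∧
        |(∑ j ∈ Finset.range n, φ (f^[j] x)) / (n : ℝ) - ∫ z, φ z ∂μ| < 1 / (N : ℝ)} =
        ⋃ n ∈ Set.Ioi N, {x : X |
          |(∑ j ∈ Finset.range n, φ (f^[j] x)) / (n : ℝ) - ∫ z, φ z ∂μ| < 1 / (N : ℝ)} := by
      ext x; simp [Set.mem_iUnion, Set.mem_Ioi]
    rw [heq]
    exact isOpen_biUnion fun n _ =>
      isOpen_lt (((hcont n).sub continuous_const).abs) continuous_const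
  have hsub : ∀ (μ : Measure X) (N : ℕ), 1 ≤ N → ergodicBasin f μ ⊆ E μ N := by
    intro μ N hN x hx
    rw [hE]
    have hpos : (0 : ℝ) < 1 / (N : ℝ) := by
      have : (0 : ℝ) < (N : ℝ) := by exact_mod_cast hN
      positivity
    have htend := hx ⟨φ, hφ⟩
    rw [Metric.tendsto_atTop] at htend
    obtain ⟨M, hM⟩ := htend _ hpos
    refine ⟨max M (N + 1), lt_of_lt_of_le (Nat.lt_succ_self N) (le_max_right _ _), ?_⟩
    have := hM (max M (N + 1)) (le_max_left _ _)
    rwa [Real.dist_eq] at this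
  have hfreq : ∀ (μ : Measure X) (x : X),
      (∀ N : ℕ, 1 ≤ N → x ∈ E μ N) →
      ∀ N : ℕ, 1 ≤ N → ∃ n : ℕ, N < n ∧
        |(∑ j ∈ Finset.range n, φ (f^[j] x)) / (n : ℝ) - ∫ z, φ z ∂μ| < 1 / (N : ℝ) := by
    intro μ x hx N hN
    have := hx N hN
    rwa [hE] at this
  constructor
  · intro N hN
    refine ⟨(hopen μ₁ N).inter (hopen μ₂ N), ?_⟩
    exact (hd₁.mono (hsub μ₁ N hN)).inter_of_isOpen_left
      (hd₂.mono (hsub μ₂ N hN)) (hopen μ₁ N)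
  · intro x hx
    rintro ⟨l, hl⟩
    have hx' : ∀ N : ℕ, 1 ≤ N → x ∈ E μ₁ N ∩ E μ₂ N := by
      intro N hN
      exact Set.mem_iInter₂.mp hx N hN
    have h1 : l = ∫ z, φ z ∂μ₁ :=
      limit_eq_of_freq _ l _ hl (hfreq μ₁ x (fun N hN => (hx' N hN).1))
    have h2 : l = ∫ z, φ z ∂μ₂ :=
      limit_eq_of_freq _ l _ hl (hfreq μ₂ x (fun N hN => (hx' N hN).2))
    exact hne (h1 ▸ h2)
end

section
/- Let X be a compact metric space, f : X → X continuous, and suppose x₁, x₂ ∈ X have dense forward orbits and there is a continuous φ : X → ℝ such that the Birkhoff limits ℓ_i = lim_{n→∞} (1/n) ∑_{j=0}^{n−1} φ(f^j(x_i)) exist at x₁ and x₂ and satisfy ℓ₁ ≠ ℓ₂. Then the set of φ-irregular points is residual in X. -/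
open Filter Topology

/-- Birkhoff averages along the orbit of a point converge to the same limit. -/
lemma birkhoff_shift {X : Type*} [MetricSpace X] (f : X → X) (φ : X → ℝ) (x : X) (l : ℝ) (k : ℕ)
    (h : Filter.Tendsto (fun n => (∑ j ∈ Finset.range n, φ (f^[j] x)) / (n : ℝ))
      Filter.atTop (𝓝 l)) :
    Filter.Tendsto (fun n => (∑ j ∈ Finset.range n, φ (f^[j] (f^[k] x))) / (n : ℝ))
      Filter.atTop (𝓝 l) := by
  set S : ℕ → ℝ := fun n => ∑ j ∈ Finset.range n, φ (f^[j] x) with hSdef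
  have key : ∀ n, (∑ j ∈ Finset.range n, φ (f^[j] (f^[k] x))) = S (n + k) - S k := by
    intro n
    have h1 : ∀ j, φ (f^[j] (f^[k] x)) = φ (f^[k + j] x) := by
      intro j
      rw [← Function.iterate_add_apply, add_comm]
    have h2 : S (k + n) = S k + ∑ j ∈ Finset.range n, φ (f^[k + j] x) :=
      Finset.sum_range_add (fun j => φ (f^[j] x)) k n
    simp only [h1]
    rw [add_comm n k]
    linarith
  have t1 : Filter.Tendsto (fun n => S (n + k) / ((n + k : ℕ) : ℝ)) atTop (𝓝 l) :=
    h.comp (tendsto_add_atTop_nat k)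
  have t2 : Filter.Tendsto (fun n : ℕ => ((n + k : ℕ) : ℝ) / (n : ℝ)) atTop (𝓝 1) := by
    have h0 : Filter.Tendsto (fun n : ℕ => 1 + (k : ℝ) * (1 / n)) atTop (𝓝 (1 + (k:ℝ) * 0)) :=
      tendsto_const_nhds.add (tendsto_const_nhds.mul tendsto_one_div_atTop_nhds_zero_nat)
    rw [mul_zero, add_zero] at h0
    refine h0.congr' ?_
    filter_upwards [eventually_ge_atTop 1] with n hn
    have hn0 : (n : ℝ) ≠ 0 := Nat.cast_ne_zero.mpr (by omega)
    push_cast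
    field_simp
  have t3 : Filter.Tendsto (fun n : ℕ => S k * (1 / (n:ℝ))) atTop (𝓝 0) := by
    have := (tendsto_one_div_atTop_nhds_zero_nat).const_mul (S k)
    simpa using this
  have comb := (t1.mul t2).sub t3
  rw [mul_one, sub_zero] at comb
  refine comb.congr' ?_
  filter_upwards [eventually_ge_atTop 1] with n hn
  rw [key n]
  have hn0 : (n : ℝ) ≠ 0 := Nat.cast_ne_zero.mpr (by omega)
  have hnk0 : ((n + k : ℕ) : ℝ) ≠ 0 := Nat.cast_ne_zero.mpr (by omega)
  field_simp

/-- Main auxiliary lemma, assuming `l₁ < l₂`. -/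
lemma irregular_residual_aux
    {X : Type*} [MetricSpace X] [CompactSpace X]
    (f : X → X) (hf : Continuous f)
    (φ : X → ℝ) (hφ : Continuous φ)
    (x₁ x₂ : X)
    (hd₁ : Dense (Set.range fun n : ℕ => f^[n] x₁))
    (hd₂ : Dense (Set.range fun n : ℕ => f^[n] x₂))
    (l₁ l₂ : ℝ) (hl : l₁ < l₂)
    (h₁ : Filter.Tendsto (fun n => (∑ j ∈ Finset.range n, φ (f^[j] x₁)) / (n : ℝ))
      Filter.atTop (𝓝 l₁))
    (h₂ : Filter.Tendsto (fun n => (∑ j ∈ Finset.range n, φ (f^[j] x₂)) / (n : ℝ))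
      Filter.atTop (𝓝 l₂)) :
    {x : X | ¬ ∃ l : ℝ, Filter.Tendsto
        (fun n => (∑ j ∈ Finset.range n, φ (f^[j] x)) / (n : ℝ)) Filter.atTop (𝓝 l)}
      ∈ residual X := by
  set a : ℝ := (2 * l₁ + l₂) / 3 with ha
  set b : ℝ := (l₁ + 2 * l₂) / 3 with hb
  have h1a : l₁ < a := by rw [ha]; linarith
  have h2b : b < l₂ := by rw [hb]; linarith
  have hab : a < b := by rw [ha, hb]; linarith
  set A : ℕ → X → ℝ := fun n x => (∑ j ∈ Finset.range n, φ (f^[j] x)) / (n : ℝ) with hA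
  have hAc : ∀ n, Continuous (A n) := fun n =>
    (continuous_finset_sum _ fun j _ => hφ.comp (hf.iterate j)).div_const _
  set U : ℕ → Set X := fun N => ⋃ n, ⋃ _ : N ≤ n, {x | A n x < a} with hU
  set V : ℕ → Set X := fun N => ⋃ n, ⋃ _ : N ≤ n, {x | b < A n x} with hV
  have hUmem : ∀ N, U N ∈ residual X := by
    intro N
    refine residual_of_dense_open ?_ ?_
    · exact isOpen_iUnion fun n => isOpen_iUnion fun _ =>
        isOpen_lt (hAc n) continuous_const
    · refine hd₁.mono ?_
      rintro _ ⟨k, rfl⟩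
      have ht := birkhoff_shift f φ x₁ l₁ k h₁
      have hev : ∀ᶠ n in atTop, A n (f^[k] x₁) < a := ht.eventually_lt_const h1a
      obtain ⟨n, hn, hna⟩ := ((eventually_ge_atTop N).and hev).exists
      exact Set.mem_iUnion.mpr ⟨n, Set.mem_iUnion.mpr ⟨hn, hna⟩⟩
  have hVmem : ∀ N, V N ∈ residual X := by
    intro N
    refine residual_of_dense_open ?_ ?_
    · exact isOpen_iUnion fun n => isOpen_iUnion fun _ =>
        isOpen_lt continuous_const (hAc n)
    · refine hd₂.mono ?_
      rintro _ ⟨k, rfl⟩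
      have ht := birkhoff_shift f φ x₂ l₂ k h₂
      have hev : ∀ᶠ n in atTop, b < A n (f^[k] x₂) := ht.eventually_const_lt h2b
      obtain ⟨n, hn, hna⟩ := ((eventually_ge_atTop N).and hev).exists
      exact Set.mem_iUnion.mpr ⟨n, Set.mem_iUnion.mpr ⟨hn, hna⟩⟩
  have hG : (⋂ N, U N ∩ V N) ∈ residual X :=
    countable_iInter_mem.mpr fun N => Filter.inter_mem (hUmem N) (hVmem N)
  refine Filter.mem_of_superset hG ?_
  intro x hx
  rintro ⟨l, hlx⟩
  have hε : (0:ℝ) < (b - a) / 2 := by linarith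
  obtain ⟨N, hN⟩ := (Metric.tendsto_atTop.mp hlx) ((b - a) / 2) hε
  have hxN := Set.mem_iInter.mp hx N
  obtain ⟨hxU, hxV⟩ := hxN
  simp only [hU, hV, Set.mem_iUnion, Set.mem_setOf_eq] at hxU hxV
  obtain ⟨n, hn, hna⟩ := hxU
  obtain ⟨m, hm, hmb⟩ := hxV
  have d1 := hN n hn
  have d2 := hN m hm
  rw [Real.dist_eq, abs_lt] at d1 d2
  linarith

/-- If two points with dense forward orbits have Birkhoff averages of φ converging to two
distinct limits, then the φ-irregular set is residual. -/
theorem irregular_residual_of_two_dense_orbits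
    {X : Type*} [MetricSpace X] [CompactSpace X]
    (f : X → X) (hf : Continuous f)
    (φ : X → ℝ) (hφ : Continuous φ)
    (x₁ x₂ : X)
    (hd₁ : Dense (Set.range fun n : ℕ => f^[n] x₁))
    (hd₂ : Dense (Set.range fun n : ℕ => f^[n] x₂))
    (l₁ l₂ : ℝ) (hl : l₁ ≠ l₂)
    (h₁ : Filter.Tendsto (fun n => (∑ j ∈ Finset.range n, φ (f^[j] x₁)) / (n : ℝ))
      Filter.atTop (𝓝 l₁))
    (h₂ : Filter.Tendsto (fun n => (∑ j ∈ Finset.range n, φ (f^[j] x₂)) / (n : ℝ))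
      Filter.atTop (𝓝 l₂)) :
    {x : X | ¬ ∃ l : ℝ, Filter.Tendsto
        (fun n => (∑ j ∈ Finset.range n, φ (f^[j] x)) / (n : ℝ)) Filter.atTop (𝓝 l)}
      ∈ residual X := by
  rcases hl.lt_or_gt with h | h
  · exact irregular_residual_aux f hf φ hφ x₁ x₂ hd₁ hd₂ l₁ l₂ h h₁ h₂
  · exact irregular_residual_aux f hf φ hφ x₂ x₁ hd₂ hd₁ l₂ l₁ h h₂ h₁
end
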